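/- Every binary 1-nested network is a galled tree: in a rooted DAG where every hybrid node has in-degree 2 and out-degree 1, every internal tree node has out-degree 2, and no node is intermediate in reticulation cycles for two different hybrid nodes, any two distinct reticulation cycles have disjoint node sets. -/

import Mathlib

/-- An evolutionary network: a rooted directed acyclic graph. -/
structure EvoNet (V : Type*) where
  arc : V → V → Prop
  root : V
  acyclic : ∀ v : V, ¬ Relation.TransGen arc v v
  rooted : ∀ v : V, Relation.ReflTransGen arc root v

namespace EvoNet

variable {V : Type*}

/-- A hybrid node: in-degree at least 2. -/
def IsHybrid (N : EvoNet V) (v : V) : Prop :=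
  ∃ u w : V, u ≠ w ∧ N.arc u v ∧ N.arc w v

/-- A tree node: in-degree at most 1. -/
def IsTreeNode (N : EvoNet V) (v : V) : Prop := ¬ N.IsHybrid v

/-- A (directed) path, given as its nonempty list of nodes. -/
def IsPath (N : EvoNet V) (p : List V) : Prop := p ≠ [] ∧ p.Chain' N.arc

/-- The intermediate (non-endpoint) nodes of a path. -/
def interm (p : List V) : Set V := {x | x ∈ (p.drop 1).dropLast}

/-- A reticulation cycle for the hybrid node `hend`: a pair of internally
disjoint nontrivial paths with the same origin (the split node), both ending
in `hend`. -/
structure RetCycle (N : EvoNet V) where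
  hend : V
  p : List V
  q : List V
  isPath_p : N.IsPath p
  isPath_q : N.IsPath q
  len_p : 2 ≤ p.length
  len_q : 2 ≤ q.length
  same_origin : p.head? = q.head?
  last_p : p.getLast? = some hend
  last_q : q.getLast? = some hend
  hybrid : N.IsHybrid hend
  intDisjoint : ∀ x : V, x ∈ interm p → x ∉ interm q
  ne : p ≠ q

/-- The nodes of a reticulation cycle. -/
def RetCycle.nodes {N : EvoNet V} (c : RetCycle N) : Set V :=
  {x | x ∈ c.p ∨ x ∈ c.q}

/-- The arcs of a reticulation cycle. -/
def RetCycle.arcs {N : EvoNet V} (c : RetCycle N) : Set (V × V) :=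
  {e | e ∈ c.p.zip c.p.tail ∨ e ∈ c.q.zip c.q.tail}

/-- The intermediate nodes of a reticulation cycle. -/
def RetCycle.intermNodes {N : EvoNet V} (c : RetCycle N) : Set V :=
  interm c.p ∪ interm c.q

/-- `s` is the split node of the reticulation cycle `c`. -/
def RetCycle.SplitIs {N : EvoNet V} (c : RetCycle N) (s : V) : Prop :=
  c.p.head? = some s

/-- Two reticulation cycles are the same (as unordered pairs of merge paths). -/
def RetCycle.Equiv {N : EvoNet V} (c₁ c₂ : RetCycle N) : Prop :=
  (c₁.p = c₂.p ∧ c₁.q = c₂.q) ∨ (c₁.p = c₂.q ∧ c₁.q = c₂.p)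

/-- 1-nested: no node is intermediate in reticulation cycles for two
different hybrid nodes. -/
def OneNested (N : EvoNet V) : Prop :=
  ∀ c₁ c₂ : RetCycle N, c₁.hend ≠ c₂.hend →
    ∀ x : V, x ∈ c₁.intermNodes → x ∉ c₂.intermNodes

/-- Galled tree: distinct reticulation cycles have disjoint node sets. -/
def Galled (N : EvoNet V) : Prop :=
  ∀ c₁ c₂ : RetCycle N, ¬ c₁.Equiv c₂ → Disjoint c₁.nodes c₂.nodes

/-- Weakly galled tree: distinct reticulation cycles have disjoint arc sets. -/
def WeaklyGalled (N : EvoNet V) : Prop :=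
  ∀ c₁ c₂ : RetCycle N, ¬ c₁.Equiv c₂ → Disjoint c₁.arcs c₂.arcs

/-- 2-hybrid: every hybrid node has in-degree exactly 2. -/
def TwoHybrid (N : EvoNet V) : Prop :=
  ∀ v : V, N.IsHybrid v →
    ∃ u w : V, u ≠ w ∧ N.arc u v ∧ N.arc w v ∧ ∀ z : V, N.arc z v → z = u ∨ z = w

/-- Hybrid-1: every hybrid node has out-degree exactly 1. -/
def HybridOne (N : EvoNet V) : Prop :=
  ∀ v : V, N.IsHybrid v → ∃! w : V, N.arc v w

/-- Semibinary: hybrid nodes have in-degree 2 and out-degree 1. -/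
def Semibinary (N : EvoNet V) : Prop := N.TwoHybrid ∧ N.HybridOne

/-- Node of out-degree exactly 2. -/
def OutDegTwo (N : EvoNet V) (v : V) : Prop :=
  ∃ u w : V, u ≠ w ∧ N.arc v u ∧ N.arc v w ∧ ∀ z : V, N.arc v z → z = u ∨ z = w

/-- An internal (non-leaf) node. -/
def IsInternal (N : EvoNet V) (v : V) : Prop := ∃ w : V, N.arc v w

/-- Binary (fully resolved): semibinary and internal tree nodes have
out-degree 2. -/
def Binary (N : EvoNet V) : Prop :=
  N.Semibinary ∧ ∀ v : V, N.IsTreeNode v → N.IsInternal v → N.OutDegTwo v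

/-- Undirected adjacency induced by a set of arcs. -/
def uadj (A : Set (V × V)) (x y : V) : Prop := (x, y) ∈ A ∨ (y, x) ∈ A

/-- The vertices of a subgraph given by a set of arcs. -/
def everts (A : Set (V × V)) : Set V := {x | ∃ y : V, (x, y) ∈ A ∨ (y, x) ∈ A}

/-- Connectedness of the underlying undirected graph of a set of arcs. -/
def EConnected (A : Set (V × V)) : Prop :=
  ∀ x y : V, x ∈ everts A → y ∈ everts A → Relation.ReflTransGen (uadj A) x y

/-- Remove a node and all arcs incident to it. -/
def avoid (A : Set (V × V)) (v : V) : Set (V × V) :=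
  {e ∈ A | e.1 ≠ v ∧ e.2 ≠ v}

/-- A biconnected subgraph of a network: a set of arcs of the network whose
underlying undirected graph is connected and remains connected after the
removal of any single node (with all arcs incident to it). -/
def Biconnected (N : EvoNet V) (A : Set (V × V)) : Prop :=
  (∀ e ∈ A, N.arc e.1 e.2) ∧ EConnected A ∧ ∀ v : V, EConnected (avoid A v)

/-- Level-1: no biconnected subgraph contains more than one hybrid node. -/
def LevelOne (N : EvoNet V) : Prop :=
  ∀ A : Set (V × V), N.Biconnected A →
    ∀ h₁ h₂ : V, N.IsHybrid h₁ → N.IsHybrid h₂ →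
      h₁ ∈ everts A → h₂ ∈ everts A → h₁ = h₂

/-- `v` is a descendant of `u`. -/
def Desc (N : EvoNet V) (u v : V) : Prop := Relation.ReflTransGen N.arc u v

/-- `v` is a proper descendant of `u`. -/
def ProperDesc (N : EvoNet V) (u v : V) : Prop := Relation.TransGen N.arc u v

/-- `w` is a minimal common ancestor of `u` and `v`: a common ancestor that is
a proper ancestor of no other common ancestor of them. -/
def IsMCA (N : EvoNet V) (w u v : V) : Prop :=
  N.Desc w u ∧ N.Desc w v ∧
    ∀ z : V, N.Desc z u → N.Desc z v → ¬ N.ProperDesc w z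

end EvoNet

/-!
The heart of the proof is that in a 1-nested network no intermediate node `w` of a reticulation
cycle `c` is a hybrid. Otherwise `w` has, besides its predecessor `x` on `c`, a second parent,
so there is a reticulation cycle `E` for `w` entering `w` through `x`. Splicing the two paths of
`E` into `c` produces a reticulation cycle for the hybrid end of `c` that shares an intermediate
node with `E`, against 1-nestedness.

Given this, two cycles with different hybrid ends cannot meet: a common node other than a split
node would be intermediate or the end in both cycles, and at a split node of one cycle we move to
a child, which (binary network) again lies on both cycles. Two cycles with the same hybrid end
enter it through its only two parents; going backwards along paths of tree nodes they cannot
diverge, so they consist of the same two paths.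
-/

namespace List

variable {α : Type*} {R : α → α → Prop}

theorem exists_cons_suffix_disjoint (a : α) (l₁ l₂ : List α) :
    ∃ b m₁ m₂, b :: m₁ <:+ a :: l₁ ∧ b :: m₂ <:+ a :: l₂ ∧ m₁.Disjoint m₂ := by
  by_cases h : ∃ z ∈ l₁, z ∈ l₂
  · obtain ⟨z, hz₁, hz₂⟩ := h
    obtain ⟨k₁, m₁, rfl⟩ := append_of_mem hz₁
    obtain ⟨k₂, m₂, rfl⟩ := append_of_mem hz₂
    have : m₁.length < (k₁ ++ z :: m₁).length := by
      simp only [length_append, length_cons]; omega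
    obtain ⟨b, n₁, n₂, h₁, h₂, hd⟩ := exists_cons_suffix_disjoint z m₁ m₂
    refine ⟨b, n₁, n₂, h₁.trans ?_, h₂.trans ?_, hd⟩ <;>
      exact (suffix_append _ _).trans (suffix_cons _ _)
  · push Not at h
    exact ⟨a, l₁, l₂, suffix_refl _, suffix_refl _, fun x h₁ h₂ => h x h₁ h₂⟩
termination_by l₁.length

theorem IsChain.prefix_or_prefix {l₁ l₂ : List α} (h₁ : l₁.IsChain R) (h₂ : l₂.IsChain R)
    (hhead : l₁.head? = l₂.head?) (huniq : ∀ x ∈ l₁.dropLast, ∀ y z, R x y → R x z → y = z) :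
    l₁ <+: l₂ ∨ l₂ <+: l₁ := by
  induction l₁ generalizing l₂ with
  | nil => exact .inl nil_prefix
  | cons a t ih =>
    rcases l₂ with _ | ⟨b, t₂⟩
    · exact .inr nil_prefix
    obtain rfl : a = b := by simpa using hhead
    rcases t with _ | ⟨c, t⟩
    · exact .inl ⟨t₂, rfl⟩
    rcases t₂ with _ | ⟨d, t₂⟩
    · exact .inr ⟨c :: t, rfl⟩
    obtain rfl : c = d :=
      huniq a (by simp) c d (isChain_cons_cons.1 h₁).1 (isChain_cons_cons.1 h₂).1
    simpa using ih h₁.tail h₂.tail rfl fun x hx => huniq x (by simp_all)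

theorem IsChain.suffix_or_suffix {l₁ l₂ : List α} (h₁ : l₁.IsChain R) (h₂ : l₂.IsChain R)
    (hlast : l₁.getLast? = l₂.getLast?) (huniq : ∀ x ∈ l₁.tail, ∀ y z, R y x → R z x → y = z) :
    l₁ <:+ l₂ ∨ l₂ <:+ l₁ := by
  simp only [← reverse_prefix]
  exact IsChain.prefix_or_prefix (R := fun x y => R y x) (isChain_reverse.2 h₁)
    (isChain_reverse.2 h₂) (by simpa using hlast) fun x hx => huniq x (by simpa using hx)

theorem IsChain.exists_rel_of_mem_dropLast {l : List α} (hl : l.IsChain R) {x : α}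
    (hx : x ∈ l.dropLast) : ∃ y ∈ l.tail, R x y := by
  induction l with
  | nil => simp at hx
  | cons a t ih =>
    rcases t with _ | ⟨b, t⟩
    · simp at hx
    rcases mem_cons.1 (by simpa using hx) with rfl | hx
    · exact ⟨b, by simp, (isChain_cons_cons.1 hl).1⟩
    · obtain ⟨y, hy, hxy⟩ := ih hl.tail (by simpa using hx)
      exact ⟨y, by simp_all, hxy⟩

theorem IsChain.append_cons {l₁ l₂ : List α} {a : α} (h₁ : (l₁ ++ [a]).IsChain R)
    (h₂ : (a :: l₂).IsChain R) : (l₁ ++ a :: l₂).IsChain R := by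
  simpa using h₁.append_overlap h₂ (cons_ne_nil a [])

theorem IsChain.rel_of_getLast? {l : List α} {a b : α} (h : (l ++ [b]).IsChain R)
    (ha : l.getLast? = some a) : R a b :=
  (isChain_append.1 h).2.2 a ha b rfl

end List

namespace EvoNet

variable {V : Type*} {N : EvoNet V}

theorem pairwise_transGen_of_isChain {l : List V} (hl : l.IsChain N.arc) :
    l.Pairwise (Relation.TransGen N.arc) :=
  List.isChain_iff_pairwise.1 (hl.imp fun _ _ => Relation.TransGen.single)

theorem ne_of_transGen {a b : V} (h : Relation.TransGen N.arc a b) : a ≠ b := by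
  rintro rfl
  exact N.acyclic a h

theorem transGen_of_isChain_cons {a x : V} {l : List V} (hl : (a :: l).IsChain N.arc)
    (hx : x ∈ l) : Relation.TransGen N.arc a x :=
  List.rel_of_pairwise_cons (pairwise_transGen_of_isChain hl) hx

@[simp] theorem interm_cons_append_singleton (a b : V) (l : List V) :
    interm (a :: (l ++ [b])) = {x | x ∈ l} := by
  ext; simp [interm]

namespace RetCycle

variable (c : RetCycle N)

theorem isChain_p : c.p.IsChain N.arc := c.isPath_p.2

theorem isChain_q : c.q.IsChain N.arc := c.isPath_q.2

theorem exists_eq_cons_append : ∃ s P Q, c.p = s :: P ++ [c.hend] ∧ c.q = s :: Q ++ [c.hend] := by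
  have split (l : List V) (hl : 2 ≤ l.length) (hlast : l.getLast? = some c.hend) :
      ∃ s P, l = s :: P ++ [c.hend] := by
    obtain ⟨s, t, rfl⟩ := List.exists_cons_of_ne_nil (show l ≠ [] by rintro rfl; simp at hl)
    rcases t.eq_nil_or_concat with rfl | ⟨P, h, rfl⟩
    · simp at hl
    · exact ⟨s, P, by simp_all [List.getLast?_cons]⟩
  obtain ⟨s, P, hp⟩ := split c.p c.len_p c.last_p
  obtain ⟨s', Q, hq⟩ := split c.q c.len_q c.last_q
  obtain rfl : s = s' := by simpa [hp, hq] using c.same_origin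
  exact ⟨s, P, Q, hp, hq⟩

def swap : RetCycle N where
  hend := c.hend
  p := c.q
  q := c.p
  isPath_p := c.isPath_q
  isPath_q := c.isPath_p
  len_p := c.len_q
  len_q := c.len_p
  same_origin := c.same_origin.symm
  last_p := c.last_q
  last_q := c.last_p
  hybrid := c.hybrid
  intDisjoint := fun x hq hp => c.intDisjoint x hp hq
  ne := c.ne.symm

variable {c} {s h h' : V} {P Q : List V}

theorem mem_intermNodes_iff (hp : c.p = s :: P ++ [h]) (hq : c.q = s :: Q ++ [h']) {x : V} :
    x ∈ c.intermNodes ↔ x ∈ P ∨ x ∈ Q := by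
  simp [intermNodes, hp, hq]

theorem disjoint (hp : c.p = s :: P ++ [h]) (hq : c.q = s :: Q ++ [h']) : P.Disjoint Q :=
  fun x hP hQ => c.intDisjoint x (by simpa [hp]) (by simpa [hq])

theorem ne_hend_of_mem (hp : c.p = s :: P ++ [c.hend]) {x : V} (hx : x ∈ P) : x ≠ c.hend :=
  ne_of_transGen <| (List.pairwise_append.1 (pairwise_transGen_of_isChain (hp ▸ c.isChain_p))).2.2
    x (List.mem_cons_of_mem s hx) c.hend (List.mem_singleton_self _)

end RetCycle

theorem exists_retCycle_of_isChain {s h : V} {P Q : List V} (hP : (s :: P ++ [h]).IsChain N.arc)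
    (hQ : (s :: Q ++ [h]).IsChain N.arc) (hh : N.IsHybrid h) (hdisj : P.Disjoint Q)
    (hne : P ≠ Q) : ∃ c : RetCycle N, c.hend = h ∧ c.p = s :: P ++ [h] ∧ c.q = s :: Q ++ [h] :=
  ⟨⟨h, s :: P ++ [h], s :: Q ++ [h], ⟨by simp, hP⟩, ⟨by simp, hQ⟩, by simp, by simp, rfl,
    by simp [List.getLast?_cons], by simp [List.getLast?_cons], hh,
    by simpa using fun x hx hx' => hdisj hx hx', by simpa using hne⟩, rfl, rfl, rfl⟩

theorem exists_retCycle_of_arc {u₁ u₂ v : V} (h₁ : N.arc u₁ v) (h₂ : N.arc u₂ v)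
    (hne : u₁ ≠ u₂) : ∃ (c : RetCycle N) (s : V) (P Q : List V), c.hend = v ∧
      c.p = s :: P ++ [v] ∧ c.q = s :: Q ++ [v] ∧ (s :: P).getLast? = some u₁ := by
  obtain ⟨l₁, hl₁, hu₁⟩ := List.exists_isChain_cons_of_relationReflTransGen (N.rooted u₁)
  obtain ⟨l₂, hl₂, hu₂⟩ := List.exists_isChain_cons_of_relationReflTransGen (N.rooted u₂)
  obtain ⟨s, P, Q, hP, hQ, hdisj⟩ := List.exists_cons_suffix_disjoint N.root l₁ l₂
  have hPu : (s :: P).getLast (by simp) = u₁ := (hP.getLast _).trans hu₁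
  have hQu : (s :: Q).getLast (by simp) = u₂ := (hQ.getLast _).trans hu₂
  have extend {l : List V} {u : V} (hl : l.IsChain N.arc) (hne : l ≠ [])
      (hlu : l.getLast hne = u) (huv : N.arc u v) : (l ++ [v]).IsChain N.arc :=
    List.isChain_append.2 ⟨hl, by simp, by simp [List.getLast?_eq_some_getLast hne, hlu, huv]⟩
  obtain ⟨c, hc, hcp, hcq⟩ := exists_retCycle_of_isChain (extend (hl₁.suffix hP) (by simp) hPu h₁)
    (extend (hl₂.suffix hQ) (by simp) hQu h₂) ⟨u₁, u₂, hne, h₁, h₂⟩ hdisj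
    (by rintro rfl; exact hne (hPu.symm.trans hQu))
  exact ⟨c, s, P, Q, hc, hcp, hcq, by simp [List.getLast?_eq_some_getLast, hPu]⟩

namespace RetCycle

variable {c : RetCycle N} {s x : V} {P Q : List V}

theorem mem_nodes (hx : x ∈ c.nodes) :
    c.SplitIs x ∨ x ∈ insert c.hend c.intermNodes := by
  obtain ⟨s, P, Q, hp, hq⟩ := c.exists_eq_cons_append
  simp only [nodes, hp, hq, Set.mem_ofPred_eq, List.mem_cons, List.mem_append,
    List.not_mem_nil, or_false] at hx
  simp only [SplitIs, hp, List.cons_append, List.head?_cons, Option.some.injEq,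
    Set.mem_insert_iff, c.mem_intermNodes_iff hp hq]
  tauto

theorem exists_arc_of_mem_nodes (hx : x ∈ c.nodes) (hxh : x ≠ c.hend) :
    ∃ y, N.arc x y ∧ y ∈ insert c.hend c.intermNodes := by
  obtain ⟨s, P, Q, hp, hq⟩ := c.exists_eq_cons_append
  have step {l : List V} {R : List V} (hl : l.IsChain N.arc) (hlR : l = s :: R ++ [c.hend])
      (hR : ∀ y ∈ R, y ∈ c.intermNodes) (hx : x ∈ l) :
      ∃ y, N.arc x y ∧ y ∈ insert c.hend c.intermNodes := by
    subst hlR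
    obtain ⟨y, hy, hxy⟩ := hl.exists_rel_of_mem_dropLast (x := x)
      (by rw [List.dropLast_concat]; simpa [hxh] using hx)
    refine ⟨y, hxy, ?_⟩
    simp only [List.cons_append, List.tail_cons, List.mem_append, List.mem_singleton] at hy
    rcases hy with hy | rfl
    exacts [.inr (hR y hy), .inl rfl]
  rcases hx with hx | hx
  · exact step c.isChain_p hp (fun y hy => (c.mem_intermNodes_iff hp hq).2 (.inl hy)) hx
  · exact step c.isChain_q hq (fun y hy => (c.mem_intermNodes_iff hp hq).2 (.inr hy)) hx

theorem exists_arc_arc_of_splitIs (hs : c.SplitIs s) : ∃ y₁ y₂, y₁ ≠ y₂ ∧ N.arc s y₁ ∧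
    N.arc s y₂ ∧ y₁ ∈ insert c.hend c.intermNodes ∧ y₂ ∈ insert c.hend c.intermNodes := by
  obtain ⟨s', P, Q, hp, hq⟩ := c.exists_eq_cons_append
  obtain rfl : s' = s := by simpa [SplitIs, hp] using hs
  have hcp := hp ▸ c.isChain_p
  have hcq := hq ▸ c.isChain_q
  have hmem {y : V} : y ∈ insert c.hend c.intermNodes ↔ y = c.hend ∨ y ∈ P ∨ y ∈ Q := by
    simp [c.mem_intermNodes_iff hp hq]
  rcases P with _ | ⟨y₁, P⟩ <;> rcases Q with _ | ⟨y₂, Q⟩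
  · exact absurd (hp.trans hq.symm) c.ne
  · refine ⟨c.hend, y₂, ?_, (List.isChain_cons_cons.1 hcp).1, (List.isChain_cons_cons.1 hcq).1,
      by simp [hmem], by simp [hmem]⟩
    exact (ne_of_transGen (transGen_of_isChain_cons hcq.tail (by simp))).symm
  · refine ⟨y₁, c.hend, ?_, (List.isChain_cons_cons.1 hcp).1, (List.isChain_cons_cons.1 hcq).1,
      by simp [hmem], by simp [hmem]⟩
    exact ne_of_transGen (transGen_of_isChain_cons hcp.tail (by simp))
  · refine ⟨y₁, y₂, ?_, (List.isChain_cons_cons.1 hcp).1, (List.isChain_cons_cons.1 hcq).1,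
      by simp [hmem], by simp [hmem]⟩
    rintro rfl
    exact c.disjoint hp hq List.mem_cons_self List.mem_cons_self

theorem not_isHybrid_of_splitIs (hb : N.HybridOne) (hs : c.SplitIs s) : ¬ N.IsHybrid s := by
  intro hh
  obtain ⟨y₁, y₂, hne, h₁, h₂, -, -⟩ := c.exists_arc_arc_of_splitIs hs
  obtain ⟨z, -, hz⟩ := hb s hh
  exact hne ((hz y₁ h₁).trans (hz y₂ h₂).symm)

theorem mem_of_arc_of_splitIs (hb : N.Binary) (hs : c.SplitIs s) {y : V} (hy : N.arc s y) :
    y ∈ insert c.hend c.intermNodes := by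
  obtain ⟨y₁, y₂, hne, h₁, h₂, hy₁, hy₂⟩ := c.exists_arc_arc_of_splitIs hs
  obtain ⟨u, v, -, -, -, huv⟩ := hb.2 s (c.not_isHybrid_of_splitIs hb.1.2 hs) ⟨y₁, h₁⟩
  rcases huv y₁ h₁ with rfl | rfl <;> rcases huv y₂ h₂ with rfl | rfl <;>
    rcases huv y hy with rfl | rfl <;> first | exact absurd rfl hne | assumption

theorem getLast?_ne (hp : c.p = s :: P ++ [c.hend]) (hq : c.q = s :: Q ++ [c.hend]) :
    (s :: P).getLast? ≠ (s :: Q).getLast? := by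
  rcases P.eq_nil_or_concat' with rfl | ⟨P, a, rfl⟩ <;>
    rcases Q.eq_nil_or_concat' with rfl | ⟨Q, b, rfl⟩
  · exact fun _ => c.ne (hp.trans hq.symm)
  · have : s ≠ b := ne_of_transGen (transGen_of_isChain_cons (hq ▸ c.isChain_q) (by simp))
    simpa [List.getLast?_cons] using this
  · have : a ≠ s := (ne_of_transGen (transGen_of_isChain_cons (hp ▸ c.isChain_p) (by simp))).symm
    simpa [List.getLast?_cons] using this
  · have : a ≠ b := by
      rintro rfl
      exact c.disjoint hp hq (by simp : a ∈ P ++ [a]) (by simp : a ∈ Q ++ [a])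
    simpa [List.getLast?_cons] using this

theorem getLast?_eq_or_getLast?_eq (hb : N.TwoHybrid) (hp : c.p = s :: P ++ [c.hend])
    (hq : c.q = s :: Q ++ [c.hend]) {z : V} (hz : N.arc z c.hend) :
    (s :: P).getLast? = some z ∨ (s :: Q).getLast? = some z := by
  obtain ⟨a, ha⟩ : ∃ a, (s :: P).getLast? = some a := ⟨_, List.getLast?_cons⟩
  obtain ⟨b, hb'⟩ : ∃ b, (s :: Q).getLast? = some b := ⟨_, List.getLast?_cons⟩
  have hab : a ≠ b := fun e => getLast?_ne hp hq (by rw [ha, hb', e])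
  have haz := (hp ▸ c.isChain_p).rel_of_getLast? ha
  have hbz := (hq ▸ c.isChain_q).rel_of_getLast? hb'
  obtain ⟨u, v, -, -, -, huv⟩ := hb c.hend c.hybrid
  rw [ha, hb', Option.some_inj, Option.some_inj]
  rcases huv a haz with rfl | rfl <;> rcases huv b hbz with rfl | rfl <;>
    rcases huv z hz with rfl | rfl <;> simp_all

end RetCycle

namespace OneNested

theorem detour_eq_nil (h1n : N.OneNested) {c E : RetCycle N} {s x w : V} {P₁ P₂ Q QE : List V}
    (hp : c.p = s :: (P₁ ++ w :: P₂) ++ [c.hend]) (hq : c.q = s :: Q ++ [c.hend])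
    (hx : (s :: P₁).getLast? = some x) (hEq : E.q = x :: QE ++ [w]) (hE : E.hend = w) :
    QE = [] := by
  by_contra hQE
  obtain ⟨α, hα⟩ := List.getLast?_eq_some_iff.1 hx
  have hwh := c.ne_hend_of_mem hp (x := w) (by simp)
  have hcp : (α ++ x :: w :: P₂ ++ [c.hend]).IsChain N.arc := by
    have h := hp ▸ c.isChain_p
    change ((s :: P₁) ++ w :: P₂ ++ [c.hend]).IsChain N.arc at h
    rw [hα] at h
    simpa using h
  have hcdisj := c.disjoint hp hq
  have hdisj : Q.Disjoint (P₁ ++ QE ++ w :: P₂) := by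
    intro y hyQ hy
    simp only [List.mem_append, List.mem_cons] at hy
    rcases hy with (hy | hy) | hy | hy
    · exact hcdisj (by simp [hy]) hyQ
    · exact h1n c E (hE ▸ hwh.symm) y ((c.mem_intermNodes_iff hp hq).2 (.inr hyQ))
        (.inr (by simpa [hEq]))
    · exact hcdisj (by simp [hy]) hyQ
    · exact hcdisj (by simp [hy]) hyQ
  -- `c.q` and `c.p` with its arc `x → w` replaced by `E.q` form a cycle `D` for `c.hend`.
  have hchain : (s :: (P₁ ++ QE ++ w :: P₂) ++ [c.hend]).IsChain N.arc := by
    have : s :: (P₁ ++ QE ++ w :: P₂) ++ [c.hend] = α ++ x :: (QE ++ w :: (P₂ ++ [c.hend])) :=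
      calc _ = (s :: P₁) ++ QE ++ w :: (P₂ ++ [c.hend]) := by simp
        _ = _ := by simp [hα]
    rw [this]
    exact (hcp.prefix ⟨w :: (P₂ ++ [c.hend]), by simp⟩).append_cons
      (List.IsChain.append_cons (l₁ := x :: QE) (hEq ▸ E.isChain_q)
        (hcp.suffix ⟨α ++ [x], by simp⟩))
  obtain ⟨D, hD, hDp, hDq⟩ := exists_retCycle_of_isChain (hq ▸ c.isChain_q) hchain c.hybrid hdisj
    fun h => hdisj (h ▸ (by simp) : w ∈ Q) (by simp)
  obtain ⟨y, hy⟩ := List.exists_mem_of_ne_nil QE hQE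
  exact h1n E D (by rw [hD, hE]; exact hwh) y (.inr (by simpa [hEq]))
    ((D.mem_intermNodes_iff hDp hDq).2 (.inr (by simp [hy])))

theorem not_mem_of_split_arc (h1n : N.OneNested) {c E : RetCycle N} {x w sE : V}
    {P₂ Q PE QE : List V} (hp : c.p = x :: w :: P₂ ++ [c.hend]) (hq : c.q = x :: Q ++ [c.hend])
    (hEp : E.p = sE :: PE ++ [w]) (hEq : E.q = sE :: QE ++ [w]) (hE : E.hend = w) : x ∉ PE := by
  intro hxE
  obtain ⟨ρ, τ, rfl⟩ := List.append_of_mem hxE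
  have hEc : E.hend ≠ c.hend := hE ▸ c.ne_hend_of_mem hp (x := w) (by simp)
  have hEdisj := E.disjoint hEp hEq
  have hcdisj := c.disjoint hp hq
  -- `E.p` up to `x` followed by `c.q`, and `E.q` followed by `c.p` after `w`, form a cycle `D`
  -- for `c.hend` through `x`.
  have hdisj : (ρ ++ x :: Q).Disjoint (QE ++ w :: P₂) := by
    intro y hy₁ hy₂
    have h₁ : y ∈ ρ ++ x :: τ ∨ y ∈ Q := by
      simp only [List.mem_append, List.mem_cons] at hy₁ ⊢; tauto
    rcases h₁ with h₁ | h₁ <;> rcases List.mem_append.1 hy₂ with h₂ | h₂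
    · exact hEdisj h₁ h₂
    · exact h1n E c hEc y ((E.mem_intermNodes_iff hEp hEq).2 (.inl h₁))
        ((c.mem_intermNodes_iff hp hq).2 (.inl h₂))
    · exact h1n E c hEc y ((E.mem_intermNodes_iff hEp hEq).2 (.inr h₂))
        ((c.mem_intermNodes_iff hp hq).2 (.inr h₁))
    · exact hcdisj h₂ h₁
  have hchainp : (sE :: (ρ ++ x :: Q) ++ [c.hend]).IsChain N.arc := by
    have hEx : (sE :: ρ ++ [x]).IsChain N.arc := (hEp ▸ E.isChain_p).prefix ⟨τ ++ [w], by simp⟩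
    have hcq : (x :: Q ++ [c.hend]).IsChain N.arc := hq ▸ c.isChain_q
    simpa using hEx.append_cons hcq
  have hchainq : (sE :: (QE ++ w :: P₂) ++ [c.hend]).IsChain N.arc := by
    simpa using List.IsChain.append_cons (l₁ := sE :: QE) (hEq ▸ E.isChain_q)
      ((hp ▸ c.isChain_p).suffix ⟨[x], rfl⟩)
  obtain ⟨D, hD, hDp, hDq⟩ := exists_retCycle_of_isChain hchainp hchainq c.hybrid hdisj
    fun h => hdisj (by simp) (h ▸ (by simp) : x ∈ QE ++ w :: P₂)
  exact h1n E D (hD ▸ hEc) x ((E.mem_intermNodes_iff hEp hEq).2 (.inl hxE))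
    ((D.mem_intermNodes_iff hDp hDq).2 (.inl (by simp)))

theorem not_isHybrid_of_mem_interm_p (h1n : N.OneNested) (c : RetCycle N) {w : V}
    (hw : w ∈ interm c.p) : ¬ N.IsHybrid w := by
  rintro ⟨u₁, u₂, hu, hu₁, hu₂⟩
  obtain ⟨s, P, Q, hp, hq⟩ := c.exists_eq_cons_append
  obtain ⟨P₁, P₂, rfl⟩ := List.append_of_mem (show w ∈ P by simpa [hp] using hw)
  obtain ⟨x, hx⟩ : ∃ x, (s :: P₁).getLast? = some x := ⟨_, List.getLast?_cons⟩
  have hxw : N.arc x w :=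
    ((hp ▸ c.isChain_p).prefix ⟨P₂ ++ [c.hend], by simp⟩).rel_of_getLast? hx
  obtain ⟨π, hπ, hπx⟩ : ∃ π, N.arc π w ∧ π ≠ x := by
    by_cases h : u₁ = x
    · exact ⟨u₂, hu₂, h ▸ hu.symm⟩
    · exact ⟨u₁, hu₁, h⟩
  obtain ⟨E, sE, PE, QE, hE, hEp, hEq, hEx⟩ := exists_retCycle_of_arc hxw hπ hπx.symm
  rcases PE.eq_nil_or_concat' with rfl | ⟨PE, x', rfl⟩
  · obtain rfl : x = sE := by simpa using hEx.symm
    exact E.ne (by rw [hEp, hEq, h1n.detour_eq_nil hp hq hx hEq hE])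
  obtain rfl : x = x' := by simpa [List.getLast?_cons] using hEx.symm
  rcases P₁ with _ | ⟨p, P₁⟩
  · obtain rfl : x = s := by simpa using hx.symm
    exact h1n.not_mem_of_split_arc hp hq hEp hEq hE (by simp)
  · have hxc : x ∈ p :: P₁ := List.mem_of_getLast? (by simpa [List.getLast?_cons] using hx)
    exact h1n c E (hE ▸ (c.ne_hend_of_mem hp (x := w) (by simp)).symm) x
      ((c.mem_intermNodes_iff hp hq).2 (.inl (List.mem_append_left _ hxc)))
      ((E.mem_intermNodes_iff hEp hEq).2 (.inl (by simp)))

theorem not_isHybrid_of_mem_intermNodes (h1n : N.OneNested) (c : RetCycle N) {w : V}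
    (hw : w ∈ c.intermNodes) : ¬ N.IsHybrid w := by
  rcases hw with hw | hw
  · exact h1n.not_isHybrid_of_mem_interm_p c hw
  · exact h1n.not_isHybrid_of_mem_interm_p c.swap hw

theorem hend_eq_of_mem (h1n : N.OneNested) {c₁ c₂ : RetCycle N} {x : V}
    (h₁ : x ∈ insert c₁.hend c₁.intermNodes) (h₂ : x ∈ insert c₂.hend c₂.intermNodes) :
    c₁.hend = c₂.hend := by
  by_contra hne
  rcases h₁ with rfl | h₁ <;> rcases h₂ with h₂ | h₂
  · exact hne h₂
  · exact h1n.not_isHybrid_of_mem_intermNodes c₂ h₂ c₁.hybrid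
  · exact h1n.not_isHybrid_of_mem_intermNodes c₁ h₁ (h₂ ▸ c₂.hybrid)
  · exact h1n c₁ c₂ hne x h₁ h₂

theorem splitIs_not_mem_nodes (h1n : N.OneNested) (hb : N.Binary)
    {c₁ c₂ : RetCycle N} (hne : c₁.hend ≠ c₂.hend) {s : V} (hs : c₁.SplitIs s) :
    s ∉ c₂.nodes := by
  intro hs₂
  have hsh : s ≠ c₂.hend := fun e => c₁.not_isHybrid_of_splitIs hb.1.2 hs (e ▸ c₂.hybrid)
  obtain ⟨y, hsy, hy₂⟩ := c₂.exists_arc_of_mem_nodes hs₂ hsh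
  exact hne (h1n.hend_eq_of_mem (c₁.mem_of_arc_of_splitIs hb hs hsy) hy₂)

theorem disjoint_nodes_of_hend_ne (h1n : N.OneNested) (hb : N.Binary)
    {c₁ c₂ : RetCycle N} (hne : c₁.hend ≠ c₂.hend) : Disjoint c₁.nodes c₂.nodes := by
  rw [Set.disjoint_left]
  intro x hx₁ hx₂
  rcases c₁.mem_nodes hx₁ with hs₁ | hy₁
  · exact h1n.splitIs_not_mem_nodes hb hne hs₁ hx₂
  rcases c₂.mem_nodes hx₂ with hs₂ | hy₂
  · exact h1n.splitIs_not_mem_nodes hb hne.symm hs₂ hx₁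
  exact hne (h1n.hend_eq_of_mem hy₁ hy₂)

theorem eq_or_mem_or_mem (h1n : N.OneNested) {c₁ c₂ : RetCycle N} {s₁ s₂ h₁ h₂ : V}
    {P₁ P₂ : List V} (hp₁ : c₁.p = s₁ :: P₁ ++ [h₁]) (hp₂ : c₂.p = s₂ :: P₂ ++ [h₂])
    (hlast : (s₁ :: P₁).getLast? = (s₂ :: P₂).getLast?) :
    (s₁ = s₂ ∧ P₁ = P₂) ∨ s₁ ∈ P₂ ∨ s₂ ∈ P₁ := by
  have huniq : ∀ y ∈ (s₁ :: P₁).tail, ∀ a b, N.arc a y → N.arc b y → a = b := by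
    intro y hy a b ha hb
    by_contra hab
    exact h1n.not_isHybrid_of_mem_interm_p c₁ (by simpa [hp₁] using hy) ⟨a, b, hab, ha, hb⟩
  rcases List.IsChain.suffix_or_suffix ((hp₁ ▸ c₁.isChain_p).prefix ⟨[h₁], rfl⟩)
    ((hp₂ ▸ c₂.isChain_p).prefix ⟨[h₂], rfl⟩) hlast huniq with h | h <;>
    rcases List.suffix_cons_iff.1 h with h | h
  · simp_all
  · exact .inr (.inl (h.subset (by simp)))
  · simp_all
  · exact .inr (.inr (h.subset (by simp)))

theorem p_eq_and_q_eq (h1n : N.OneNested) {c₁ c₂ : RetCycle N} {s₁ s₂ h : V}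
    {P₁ Q₁ P₂ Q₂ : List V} (hp₁ : c₁.p = s₁ :: P₁ ++ [h]) (hq₁ : c₁.q = s₁ :: Q₁ ++ [h])
    (hp₂ : c₂.p = s₂ :: P₂ ++ [h]) (hq₂ : c₂.q = s₂ :: Q₂ ++ [h])
    (hP : (s₁ :: P₁).getLast? = (s₂ :: P₂).getLast?)
    (hQ : (s₁ :: Q₁).getLast? = (s₂ :: Q₂).getLast?) : c₁.p = c₂.p ∧ c₁.q = c₂.q := by
  have anc {l : List V} {s x : V} {L : List V} (hl : l.IsChain N.arc) (hlL : l = s :: L ++ [h])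
      (hx : x ∈ L) : Relation.TransGen N.arc s x :=
    transGen_of_isChain_cons (hlL ▸ hl) (by simp [hx])
  have hd₁ := c₁.disjoint hp₁ hq₁
  have hd₂ := c₂.disjoint hp₂ hq₂
  rcases h1n.eq_or_mem_or_mem hp₁ hp₂ hP with ⟨rfl, rfl⟩ | hs₁ | hs₂ <;>
    rcases h1n.eq_or_mem_or_mem (c₁ := c₁.swap) (c₂ := c₂.swap) hq₁ hq₂ hQ with
      ⟨e, rfl⟩ | ht₁ | ht₂
  · exact ⟨hp₁.trans hp₂.symm, hq₁.trans hq₂.symm⟩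
  · exact absurd (anc c₂.isChain_q hq₂ ht₁) (N.acyclic s₁)
  · exact absurd (anc c₁.isChain_q hq₁ ht₂) (N.acyclic s₁)
  · exact absurd (anc c₂.isChain_p hp₂ (e ▸ hs₁)) (N.acyclic s₂)
  · exact (hd₂ hs₁ ht₁).elim
  · exact (N.acyclic s₁ ((anc c₁.isChain_q hq₁ ht₂).trans (anc c₂.isChain_p hp₂ hs₁))).elim
  · exact absurd (anc c₁.isChain_p hp₁ (e ▸ hs₂)) (N.acyclic s₁)
  · exact (N.acyclic s₁ ((anc c₁.isChain_p hp₁ hs₂).trans (anc c₂.isChain_q hq₂ ht₁))).elim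
  · exact (hd₁ hs₂ ht₂).elim

theorem equiv_of_hend_eq (h1n : N.OneNested) (hb : N.TwoHybrid) {c₁ c₂ : RetCycle N}
    (hh : c₁.hend = c₂.hend) : c₁.Equiv c₂ := by
  obtain ⟨s₁, P₁, Q₁, hp₁, hq₁⟩ := c₁.exists_eq_cons_append
  obtain ⟨s₂, P₂, Q₂, hp₂, hq₂⟩ := c₂.exists_eq_cons_append
  obtain ⟨a, ha⟩ : ∃ a, (s₂ :: P₂).getLast? = some a := ⟨_, List.getLast?_cons⟩
  obtain ⟨b, hb'⟩ : ∃ b, (s₂ :: Q₂).getLast? = some b := ⟨_, List.getLast?_cons⟩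
  have hab := RetCycle.getLast?_ne hp₂ hq₂
  have haz := (hp₂ ▸ c₂.isChain_p).rel_of_getLast? ha
  have hbz := (hq₂ ▸ c₂.isChain_q).rel_of_getLast? hb'
  rw [← hh] at hp₂ hq₂ haz hbz
  rcases c₁.getLast?_eq_or_getLast?_eq hb hp₁ hq₁ haz with ha₁ | ha₁ <;>
    rcases c₁.getLast?_eq_or_getLast?_eq hb hp₁ hq₁ hbz with hb₁ | hb₁
  · exact (hab (by rw [ha, hb', ← ha₁, hb₁])).elim
  · exact .inl (h1n.p_eq_and_q_eq hp₁ hq₁ hp₂ hq₂ (ha₁.trans ha.symm) (hb₁.trans hb'.symm))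
  · exact .inr (h1n.p_eq_and_q_eq (c₂ := c₂.swap) hp₁ hq₁ hq₂ hp₂ (hb₁.trans hb'.symm)
      (ha₁.trans ha.symm))
  · exact (hab (by rw [ha, hb', ← ha₁, hb₁])).elim

end OneNested

end EvoNet

theorem binary_oneNested_galled {V : Type*} (N : EvoNet V)
    (hb : N.Binary) (h1n : N.OneNested) : N.Galled := by
  intro c₁ c₂ hne
  by_cases hh : c₁.hend = c₂.hend
  · exact absurd (h1n.equiv_of_hend_eq hb.1.1 hh) hne
  · exact h1n.disjoint_nodes_of_hend_ne hb hh
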